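/- arXiv:1403.7212 — 4 statements merged into one kernel-verified Lean document; each statement's English description precedes it below -/
import Mathlib

section
/- (Zaslavsky's lemma) Two signed graphs on the same underlying graph have the same set of positive circles if and only if they are switching equivalent. -/
open SimpleGraph
open scoped Classical

variable {V : Type*}

/-- The sign of a walk: the product of the signs of its edges. -/
def walkSign (σ : Sym2 V → ℤˣ) {G : SimpleGraph V} {u v : V} (w : G.Walk u v) : ℤˣ :=
  (w.edges.map σ).prod

/-- A signed graph is balanced if every cycle (circle) has positive sign. -/
def IsBalanced (G : SimpleGraph V) (σ : Sym2 V → ℤˣ) : Prop :=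
  ∀ (v : V) (w : G.Walk v v), w.IsCycle → walkSign σ w = 1

/-- The sign function induced on an induced subgraph. -/
def induceSign (σ : Sym2 V → ℤˣ) (X : Set V) : Sym2 ↥X → ℤˣ :=
  fun e => σ (e.map Subtype.val)

/-- Frustration index: minimum number of edges to delete to obtain balance. -/
noncomputable def frustrationIndex (G : SimpleGraph V) (σ : Sym2 V → ℤˣ) : ℕ :=
  sInf {n | ∃ s : Finset (Sym2 V), s.card = n ∧ IsBalanced (G.deleteEdges ↑s) σ}

/-- Frustration number: minimum number of vertices to delete to obtain balance. -/
noncomputable def frustrationNumber (G : SimpleGraph V) (σ : Sym2 V → ℤˣ) : ℕ :=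
  sInf {n | ∃ X : Finset V, X.card = n ∧
    IsBalanced (G.induce ((↑X : Set V)ᶜ)) (induceSign σ ((↑X : Set V)ᶜ))}

/-- The sign function obtained by switching at a vertex `v`:
negate the sign of every (non-loop) edge incident to `v`. -/
noncomputable def switchSign (σ : Sym2 V → ℤˣ) (v : V) : Sym2 V → ℤˣ :=
  fun e => if v ∈ e then -σ e else σ e

/-- `τ` is obtained from `σ` by switching at `v` (as signatures of `G`). -/
def SwitchedAt (G : SimpleGraph V) (σ τ : Sym2 V → ℤˣ) (v : V) : Prop :=
  ∀ e ∈ G.edgeSet, τ e = switchSign σ v e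

/-- Switching equivalence: related by a finite sequence of switchings. -/
def SwitchEquiv (G : SimpleGraph V) : (Sym2 V → ℤˣ) → (Sym2 V → ℤˣ) → Prop :=
  Relation.ReflTransGen (fun σ τ => ∃ v, SwitchedAt G σ τ v)

section ZasAux

variable {G : SimpleGraph V}

private lemma sq1 (a : ℤˣ) : a * a = 1 := Int.units_mul_self a

def muls (s : V → ℤˣ) : Sym2 V → ℤˣ :=
  Sym2.lift ⟨fun x y => s x * s y, fun x y => mul_comm _ _⟩

@[simp] lemma muls_mk (s : V → ℤˣ) (x y : V) : muls s s(x,y) = s x * s y := rfl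

lemma walkSign_nil {σ : Sym2 V → ℤˣ} {u : V} : walkSign σ (Walk.nil : G.Walk u u) = 1 := rfl

lemma walkSign_cons {σ : Sym2 V → ℤˣ} {u v w : V} (h : G.Adj u v) (p : G.Walk v w) :
    walkSign σ (Walk.cons h p) = σ s(u,v) * walkSign σ p := by
  simp [walkSign]

lemma walkSign_append {σ : Sym2 V → ℤˣ} {u v w : V} (p : G.Walk u v) (q : G.Walk v w) :
    walkSign σ (p.append q) = walkSign σ p * walkSign σ q := by
  simp [walkSign, Walk.edges_append]

lemma walkSign_reverse {σ : Sym2 V → ℤˣ} {u v : V} (p : G.Walk u v) :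
    walkSign σ p.reverse = walkSign σ p := by
  simp [walkSign, Walk.edges_reverse, List.map_reverse, List.prod_reverse]

lemma walkSign_copy {σ : Sym2 V → ℤˣ} {u v u' v' : V} (p : G.Walk u v) (hu : u = u') (hv : v = v') :
    walkSign σ (p.copy hu hv) = walkSign σ p := by
  simp [walkSign, Walk.edges_copy]

lemma walkSign_mul (σ τ : Sym2 V → ℤˣ) {u v : V} (w : G.Walk u v) :
    walkSign (fun e => σ e * τ e) w = walkSign σ w * walkSign τ w := by
  simp [walkSign, List.prod_map_mul]

lemma walkSign_congr {σ τ : Sym2 V → ℤˣ} {u v : V} (w : G.Walk u v)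
    (h : ∀ e ∈ w.edges, σ e = τ e) : walkSign σ w = walkSign τ w := by
  unfold walkSign
  rw [List.map_congr_left h]

lemma walkSign_muls (s : V → ℤˣ) {u v : V} (w : G.Walk u v) :
    walkSign (muls s) w = s u * s v := by
  induction w with
  | nil => exact (sq1 _).symm
  | @cons a b c hadj p ih =>
      rw [walkSign_cons, ih, muls_mk]
      calc s a * s b * (s b * s c) = s a * (s b * s b * s c) := by
            rw [mul_assoc, mul_assoc]
        _ = s a * s c := by rw [sq1, one_mul]

lemma exists_loop_split {u x : V} (q : G.Walk u x) (hu : u ∈ q.support.tail) :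
    ∃ (c : G.Walk u u) (d : G.Walk u x), c.append d = q ∧ 0 < c.length := by
  cases q with
  | nil => simp at hu
  | cons h₂ p₃ =>
      have hu3 : u ∈ p₃.support := by simpa using hu
      exact ⟨Walk.cons h₂ (p₃.takeUntil u hu3), p₃.dropUntil u hu3,
        by rw [Walk.cons_append, p₃.take_spec hu3], by simp⟩

lemma closedWalkSign (ρ : Sym2 V → ℤˣ)
    (hcyc : ∀ (x : V) (w : G.Walk x x), w.IsCycle → walkSign ρ w = 1) :
    ∀ (n : ℕ) (x : V) (w : G.Walk x x), w.length = n → walkSign ρ w = 1 := by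
  intro n
  induction n using Nat.strong_induction_on with
  | _ n IH =>
  intro x w hn
  cases w with
  | nil => exact walkSign_nil
  | @cons _ y _ h p =>
    by_cases hnd : p.support.Nodup
    · by_cases he : s(x,y) ∈ p.edges
      · cases p with
        | nil => simp at he
        | @cons _ z _ h' p'' =>
            rcases (by simpa using he :
                (x = y ∧ y = z ∨ x = z) ∨ s(x, y) ∈ p''.edges) with (⟨rfl, rfl⟩ | rfl) | h2
            · exact absurd rfl h.ne
            · 
              have hp'' : p'' = Walk.nil := by
                have : p''.support.Nodup := by
                  simpa [Walk.support_cons] using hnd.of_cons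
                exact Walk.isPath_iff_eq_nil.mp (Walk.IsPath.mk' this)
              subst hp''
              rw [walkSign_cons, walkSign_cons, walkSign_nil, mul_one,
                Sym2.eq_swap (a := y) (b := x)]
              exact sq1 _
            · have hy : y ∈ p''.support := Walk.snd_mem_support_of_mem_edges p'' h2
              have : y ∉ p''.support := by
                simpa [Walk.support_cons] using (List.nodup_cons.mp (by
                  simpa [Walk.support_cons] using hnd)).1
              exact absurd hy this
      · exact hcyc x (Walk.cons h p)
          ((Walk.cons_isCycle_iff p h).mpr ⟨Walk.IsPath.mk' hnd, he⟩)
    · obtain ⟨u, hu⟩ := List.exists_duplicate_iff_not_nodup.mpr hnd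
      have hcount : 2 ≤ p.support.count u := List.duplicate_iff_two_le_count.mp hu
      have husup : u ∈ p.support := hu.mem
      have hspec := p.take_spec husup
      have hc1 : (p.takeUntil u husup).support.count u = 1 :=
        p.count_support_takeUntil_eq_one husup
      have hmem2 : u ∈ (p.dropUntil u husup).support.tail := by
        have hcnt := congrArg (List.count u) (congrArg Walk.support hspec)
        rw [Walk.support_append, List.count_append] at hcnt
        have : 1 ≤ ((p.dropUntil u husup).support.tail).count u := by omega
        exact List.count_pos_iff.mp this
      obtain ⟨c, d, hcd, hclen⟩ := exists_loop_split _ hmem2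
      have hplen : p.length = (p.takeUntil u husup).length + (c.length + d.length) := by
        have h1 := congrArg Walk.length hspec
        have h2 := congrArg Walk.length hcd
        rw [Walk.length_append] at h1
        rw [Walk.length_append] at h2
        omega
      have hnlen : n = 1 + (p.takeUntil u husup).length + c.length + d.length := by
        rw [Walk.length_cons] at hn
        omega
      have hsc : walkSign ρ c = 1 := IH c.length (by omega) u c rfl
      have hsw' : walkSign ρ (Walk.cons h ((p.takeUntil u husup).append d)) = 1 :=
        IH _ (by rw [Walk.length_cons, Walk.length_append]; omega) x _ rfl
      rw [walkSign_cons, walkSign_append] at hsw'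
      rw [walkSign_cons, ← hspec, ← hcd, walkSign_append, walkSign_append, hsc, one_mul]
      exact hsw'

lemma switchEquiv_of_eqOn [Nonempty V] {σ τ : Sym2 V → ℤˣ}
    (h : ∀ e ∈ G.edgeSet, τ e = σ e) : SwitchEquiv G σ τ := by
  obtain ⟨v⟩ := ‹Nonempty V›
  refine Relation.ReflTransGen.head (b := fun e => switchSign σ v e)
    ⟨v, fun e _ => rfl⟩ (Relation.ReflTransGen.single ⟨v, ?_⟩)
  intro e he
  rw [h e he]
  by_cases hv : v ∈ e <;> simp [switchSign, hv]

lemma switchEquiv_of_finset [Nonempty V] [DecidableEq V] :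
    ∀ (F : Finset V) (σ τ : Sym2 V → ℤˣ),
      (∀ e ∈ G.edgeSet, τ e = muls (fun v => if v ∈ F then (-1 : ℤˣ) else 1) e * σ e) →
      SwitchEquiv G σ τ := by
  intro F
  induction F using Finset.induction_on with
  | empty =>
      intro σ τ h
      apply switchEquiv_of_eqOn
      intro e he
      rw [h e he]
      induction e using Sym2.ind with | _ x y => simp
  | @insert a F ha ih =>
      intro σ τ h
      refine Relation.ReflTransGen.head (b := fun e => switchSign σ a e)
        ⟨a, fun e _ => rfl⟩ (ih _ _ ?_)
      intro e he
      induction e using Sym2.ind with | _ x y =>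
      have hadj : G.Adj x y := he
      have hxy : x ≠ y := hadj.ne
      rw [h _ he]
      simp only [muls_mk, switchSign, Sym2.mem_iff]
      rcases Int.units_eq_one_or (σ s(x,y)) with hσ | hσ <;>
        rw [hσ] <;>
        by_cases hx : x = a <;> by_cases hy : y = a <;>
        by_cases hxF : x ∈ F <;> by_cases hyF : y ∈ F <;>
        simp_all [Finset.mem_insert] <;>
        first
          | decide
          | rw [if_neg (fun hc => hc.elim (fun h1 => hx h1.symm) (fun h1 => hy h1.symm))]
          | exact ⟨fun h1 => hx h1.symm, fun h1 => hy h1.symm⟩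

lemma exists_muls_of_switchEquiv {σ τ : Sym2 V → ℤˣ} (h : SwitchEquiv G σ τ) :
    ∃ s : V → ℤˣ, ∀ e ∈ G.edgeSet, τ e = muls s e * σ e := by
  induction h with
  | refl =>
      refine ⟨fun _ => 1, fun e he => ?_⟩
      induction e using Sym2.ind with | _ x y => simp
  | tail _ step ih =>
      obtain ⟨s, hs⟩ := ih
      obtain ⟨v, hv⟩ := step
      refine ⟨fun w => (if w = v then -1 else 1) * s w, fun e he => ?_⟩
      induction e using Sym2.ind with | _ x y =>
      have hadj : G.Adj x y := he
      have hxy : x ≠ y := hadj.ne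
      rw [hv _ he]
      simp only [switchSign, hs _ he, muls_mk, Sym2.mem_iff]
      rcases Int.units_eq_one_or (s x) with h1 | h1 <;>
      rcases Int.units_eq_one_or (s y) with h2 | h2 <;>
      rcases Int.units_eq_one_or (σ s(x,y)) with h3 | h3 <;>
        rw [h1, h2, h3] <;>
        by_cases hx : x = v <;> by_cases hy : y = v
      all_goals first
          | exact absurd (hx.trans hy.symm) hxy
          | (subst hx; simp only [if_pos rfl, if_neg hy, Sym2.mem_iff, eq_self_iff_true,
              true_or, or_true, if_true]; decide)
          | (subst hy; simp only [if_pos rfl, if_neg hx, Sym2.mem_iff, eq_self_iff_true,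
              true_or, or_true, if_true]; decide)
          | (have hne : ¬(v = x ∨ v = y) := fun hc =>
              hc.elim (fun h' => hx h'.symm) (fun h' => hy h'.symm)
             simp only [if_neg hx, if_neg hy, Sym2.mem_iff, if_neg hne]; decide)

lemma walkSign_eq_of_muls {σ τ : Sym2 V → ℤˣ} {s : V → ℤˣ}
    (hs : ∀ e ∈ G.edgeSet, τ e = muls s e * σ e) {x : V} (w : G.Walk x x) :
    walkSign τ w = walkSign σ w := by
  have h1 : walkSign τ w = walkSign (fun e => muls s e * σ e) w :=
    walkSign_congr w (fun e hew => hs e (w.edges_subset_edgeSet hew))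
  rw [h1, walkSign_mul, walkSign_muls, sq1, one_mul]

lemma unit_solve (a b c : ℤˣ) (h : a * (b * c) = 1) : b = a * c := by
  rcases Int.units_eq_one_or a with rfl | rfl <;>
  rcases Int.units_eq_one_or b with rfl | rfl <;>
  rcases Int.units_eq_one_or c with rfl | rfl <;>
  first | rfl | exact absurd h (by decide) | exact absurd h.symm (by decide) | decide

lemma unit_solve2 (a b : ℤˣ) : a = (a * b) * b := by
  rcases Int.units_eq_one_or a with rfl | rfl <;>
  rcases Int.units_eq_one_or b with rfl | rfl <;> decide

lemma exists_muls_of_cycles (σ τ : Sym2 V → ℤˣ)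
    (hyp : ∀ (x : V) (w : G.Walk x x), w.IsCycle → (walkSign σ w = 1 ↔ walkSign τ w = 1)) :
    ∃ s : V → ℤˣ, ∀ e ∈ G.edgeSet, τ e = muls s e * σ e := by
  set ρ : Sym2 V → ℤˣ := fun e => τ e * σ e with hρ
  have hρcyc : ∀ (x : V) (w : G.Walk x x), w.IsCycle → walkSign ρ w = 1 := by
    intro x w hw
    have h1 : walkSign ρ w = walkSign τ w * walkSign σ w := walkSign_mul τ σ w
    have h2 : walkSign σ w = walkSign τ w := by
      rcases Int.units_eq_one_or (walkSign σ w) with hσ | hσ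
      · rw [hσ, ((hyp x w hw).mp hσ)]
      · rcases Int.units_eq_one_or (walkSign τ w) with hτ | hτ
        · exact absurd ((hyp x w hw).mpr hτ) (by rw [hσ]; decide)
        · rw [hσ, hτ]
      
    rw [h1, ← h2, sq1]
  have hall := closedWalkSign ρ hρcyc
  -- root of the connected component
  let root : V → V := fun v => (G.connectedComponentMk v).out
  have hre : ∀ v, G.Reachable v (root v) := by
    intro v
    have h1 : G.connectedComponentMk (root v) = G.connectedComponentMk v :=
      Quot.out_eq _
    exact (SimpleGraph.ConnectedComponent.eq.mp h1.symm)
  let s : V → ℤˣ := fun v => walkSign ρ (hre v).some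
  have key : ∀ x y, G.Adj x y → ρ s(x,y) = s x * s y := by
    intro x y h
    have hroot : root y = root x :=
      (congrArg Quot.out (SimpleGraph.ConnectedComponent.eq.mpr h.reachable)).symm
    set px : G.Walk x (root x) := (hre x).some with hpx
    set py : G.Walk y (root y) := (hre y).some with hpy
    set c : G.Walk (root x) (root x) :=
      px.reverse.append (Walk.cons h (py.copy rfl hroot)) with hc
    have h1 : walkSign ρ c = 1 := hall c.length (root x) c rfl
    rw [hc, walkSign_append, walkSign_reverse, walkSign_cons, walkSign_copy] at h1
    exact unit_solve _ _ _ h1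
  refine ⟨s, fun e he => ?_⟩
  induction e using Sym2.ind with | _ x y =>
  have hadj : G.Adj x y := he
  rw [muls_mk, ← key x y hadj]
  exact unit_solve2 (τ s(x,y)) (σ s(x,y))

end ZasAux

/-- Zaslavsky's lemma: two signed graphs on the same underlying graph have the
same set of positive circles iff they are switching equivalent. -/
theorem zaslavsky_lemma {V : Type*} [Fintype V]
    (G : SimpleGraph V) (σ τ : Sym2 V → ℤˣ) :
    (∀ (x : V) (w : G.Walk x x), w.IsCycle → (walkSign σ w = 1 ↔ walkSign τ w = 1)) ↔
      SwitchEquiv G σ τ := by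
  constructor
  · intro hyp
    rcases isEmpty_or_nonempty V with hV | hV
    · have hst : σ = τ := by
        funext e
        induction e using Sym2.ind with | _ x y => exact (IsEmpty.false x).elim
      rw [hst]
      exact Relation.ReflTransGen.refl
    · haveI := Classical.decEq V
      obtain ⟨s, hs⟩ := exists_muls_of_cycles σ τ hyp
      apply switchEquiv_of_finset (Finset.univ.filter (fun v => s v = -1))
      intro e he
      rw [hs e he]
      congr 1
      induction e using Sym2.ind with | _ x y =>
      rw [muls_mk, muls_mk]
      have hind : ∀ v : V, (if v ∈ Finset.univ.filter (fun v => s v = -1) then (-1 : ℤˣ) else 1) = s v := by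
        intro v
        rcases Int.units_eq_one_or (s v) with h1 | h1 <;> simp [h1]
      rw [hind, hind]
  · intro h x w hw
    obtain ⟨s, hs⟩ := exists_muls_of_switchEquiv h
    rw [walkSign_eq_of_muls hs w]
end

section
/- Every signed loopless subcubic graph Σ is switching equivalent to a signed graph whose set of negative edges forms a matching; consequently l₀(Σ) ≤ |V(Σ)|/2. -/
open SimpleGraph
open scoped Classical

variable {V : Type*}

private lemma unit_sq (x : ℤˣ) : x * x = 1 := by
  rcases Int.units_eq_one_or x with h | h <;> simp [h]

private lemma switch_walk_sign {G : SimpleGraph V} (σ : Sym2 V → ℤˣ) (v : V) :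
    ∀ {a b : V} (w : G.Walk a b),
      (w.edges.map (switchSign σ v)).prod =
        (if a = v then (-1 : ℤˣ) else 1) * ((if b = v then (-1 : ℤˣ) else 1) *
          (w.edges.map σ).prod) := by
  intro a b w
  induction w with
  | nil => split_ifs <;> simp
  | @cons a c b h p ih =>
      have hac : a ≠ c := h.ne
      simp only [SimpleGraph.Walk.edges_cons, List.map_cons, List.prod_cons, ih, switchSign,
        Sym2.mem_iff]
      by_cases ha : a = v <;> by_cases hc : c = v <;> by_cases hb : b = v <;>
        simp_all [eq_comm, neg_mul, mul_neg, mul_comm, mul_left_comm, mul_assoc]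

private lemma walkSign_eq_of_switchedAt {G : SimpleGraph V} {σ τ : Sym2 V → ℤˣ} {v : V}
    (h : SwitchedAt G σ τ v) {a : V} (w : G.Walk a a) : walkSign τ w = walkSign σ w := by
  have h1 : w.edges.map τ = w.edges.map (switchSign σ v) :=
    List.map_congr_left fun e he => h e (w.edges_subset_edgeSet he)
  unfold walkSign
  rw [h1, switch_walk_sign]
  by_cases ha : a = v <;> simp [ha]

private lemma walkSign_eq_of_switchEquiv {G : SimpleGraph V} {σ τ : Sym2 V → ℤˣ}
    (h : SwitchEquiv G σ τ) {a : V} (w : G.Walk a a) : walkSign τ w = walkSign σ w := by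
  induction h with
  | refl => rfl
  | tail _ hstep ih =>
      obtain ⟨v, hv⟩ := hstep
      rw [walkSign_eq_of_switchedAt hv w, ih]

private lemma sym2_mk_out {α : Type*} (e : Sym2 α) : Sym2.mk e.out.1 e.out.2 = e := by
  exact e.out_eq

/-- Every signed (loopless) subcubic graph is switching equivalent to one whose
negative edges form a matching; consequently l₀(Σ) ≤ |V(Σ)|/2. -/
theorem switchEquiv_matching_of_subcubic {V : Type*} [Fintype V]
    (G : SimpleGraph V) [DecidableRel G.Adj] (σ : Sym2 V → ℤˣ)
    (hdeg : ∀ v : V, G.degree v ≤ 3) :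
    (∃ τ : Sym2 V → ℤˣ, SwitchEquiv G σ τ ∧
      ∀ u v w : V, G.Adj u v → G.Adj u w →
        τ s(u, v) = -1 → τ s(u, w) = -1 → v = w) ∧
    2 * frustrationNumber G σ ≤ Fintype.card V := by
  classical
  set negC : (Sym2 V → ℤˣ) → ℕ :=
    fun ρ => (G.edgeFinset.filter (fun e => ρ e = -1)).card with hnegC
  obtain ⟨τ, hτeq, hτmin⟩ :
      ∃ τ, SwitchEquiv G σ τ ∧ ∀ ρ, SwitchEquiv G σ ρ → negC τ ≤ negC ρ := by
    have hne : Set.Nonempty {n | ∃ ρ, SwitchEquiv G σ ρ ∧ negC ρ = n} :=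
      ⟨negC σ, σ, Relation.ReflTransGen.refl, rfl⟩
    obtain ⟨τ, hτ, hcard⟩ := Nat.sInf_mem hne
    exact ⟨τ, hτ, fun ρ hρ => hcard ▸ Nat.sInf_le ⟨ρ, hρ, rfl⟩⟩
  have hmatch : ∀ u v w : V, G.Adj u v → G.Adj u w →
      τ s(u, v) = -1 → τ s(u, w) = -1 → v = w := by
    intro u v w huv huw hv hw
    by_contra hvw
    set τ' := switchSign τ u with hτ'
    have hstep : SwitchedAt G τ τ' u := fun e _ => rfl
    have hle : negC τ ≤ negC τ' := hτmin τ' (hτeq.tail ⟨u, hstep⟩)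
    set F := G.edgeFinset with hF
    set Fu := F.filter (fun e => u ∈ e) with hFu
    have hcardFu : Fu.card ≤ 3 := by
      rw [hFu, hF, ← SimpleGraph.incidenceFinset_eq_filter,
        SimpleGraph.card_incidenceFinset_eq_degree]
      exact hdeg u
    have split : ∀ ρ : Sym2 V → ℤˣ, negC ρ =
        (Fu.filter (fun e => ρ e = -1)).card +
          ((F.filter (fun e => ¬ u ∈ e)).filter (fun e => ρ e = -1)).card := by
      intro ρ
      rw [hnegC]
      dsimp only
      rw [show Fu.filter (fun e => ρ e = -1)
            = (F.filter (fun e => ρ e = -1)).filter (fun e => u ∈ e) by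
          rw [hFu, Finset.filter_comm],
        show (F.filter (fun e => ¬ u ∈ e)).filter (fun e => ρ e = -1)
            = (F.filter (fun e => ρ e = -1)).filter (fun e => ¬ u ∈ e) by
          rw [Finset.filter_comm]]
      exact (Finset.card_filter_add_card_filter_not _).symm
    have houter : ((F.filter fun e => ¬ u ∈ e).filter fun e => τ' e = -1)
        = ((F.filter fun e => ¬ u ∈ e).filter fun e => τ e = -1) := by
      apply Finset.filter_congr
      intro e he
      simp only [Finset.mem_filter] at he
      simp [hτ', switchSign, he.2]
    have hflip : Fu.filter (fun e => τ' e = -1) = Fu.filter (fun e => ¬ τ e = -1) := by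
      apply Finset.filter_congr
      intro e he
      simp only [hFu, Finset.mem_filter] at he
      have heq : τ' e = - τ e := by simp [hτ', switchSign, he.2]
      rw [heq]
      rcases Int.units_eq_one_or (τ e) with h1 | h1 <;> simp [h1]
    have hsub : ({s(u, v), s(u, w)} : Finset (Sym2 V)) ⊆
        Fu.filter (fun e => τ e = -1) := by
      intro e he
      simp only [Finset.mem_insert, Finset.mem_singleton] at he
      rcases he with rfl | rfl <;>
        simp [hFu, hF, Finset.mem_filter, SimpleGraph.mem_edgeFinset,
          SimpleGraph.mem_edgeSet, huv, huw, hv, hw]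
    have h2 : 2 ≤ (Fu.filter (fun e => τ e = -1)).card := by
      have hne2 : s(u, v) ≠ s(u, w) := fun h => hvw (Sym2.congr_right.mp h)
      calc 2 = ({s(u, v), s(u, w)} : Finset (Sym2 V)).card :=
              (Finset.card_pair hne2).symm
        _ ≤ _ := Finset.card_le_card hsub
    have h4 : (Fu.filter fun e => τ e = -1).card +
        (Fu.filter fun e => ¬ τ e = -1).card = Fu.card :=
      Finset.card_filter_add_card_filter_not _
    have e1 := split τ
    have e2 := split τ'
    rw [hflip, houter] at e2
    omega
  refine ⟨⟨τ, hτeq, hmatch⟩, ?_⟩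
  set negE := G.edgeFinset.filter (fun e => τ e = -1) with hnegE
  have hshare : ∀ e ∈ negE, ∀ e' ∈ negE, ∀ x : V, x ∈ e → x ∈ e' → e = e' := by
    intro e he e' he' x hx hx'
    obtain ⟨y, rfl⟩ := Sym2.mem_iff_exists.mp hx
    obtain ⟨y', rfl⟩ := Sym2.mem_iff_exists.mp hx'
    simp only [hnegE, Finset.mem_filter, SimpleGraph.mem_edgeFinset,
      SimpleGraph.mem_edgeSet] at he he'
    rw [hmatch x y y' he.1 he'.1 he.2 he'.2]
  have hinj1 : Set.InjOn (fun e : Sym2 V => e.out.1) negE := by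
    intro e he e' he' h
    have h' : e.out.1 = e'.out.1 := h
    have hm : e.out.1 ∈ e' := by rw [h']; exact Sym2.out_fst_mem e'
    exact hshare e he e' he' _ (Sym2.out_fst_mem e) hm
  have hinj2 : Set.InjOn (fun e : Sym2 V => e.out.2) negE := by
    intro e he e' he' h
    have h' : e.out.2 = e'.out.2 := h
    have hm : e.out.2 ∈ e' := by rw [h']; exact Sym2.out_snd_mem e'
    exact hshare e he e' he' _ (Sym2.out_snd_mem e) hm
  have hdiag : ∀ e ∈ negE, e.out.1 ≠ e.out.2 := by
    intro e he h
    have hE : e ∈ G.edgeSet :=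
      SimpleGraph.mem_edgeFinset.mp (Finset.mem_filter.mp he).1
    have := (Sym2.mk_isDiag_iff (x := e.out.1) (y := e.out.2)).mpr h
    rw [sym2_mk_out] at this
    exact G.not_isDiag_of_mem_edgeSet hE this
  have hdisj : Disjoint (negE.image fun e => e.out.1) (negE.image fun e => e.out.2) := by
    rw [Finset.disjoint_left]
    rintro a ha hb
    simp only [Finset.mem_image] at ha hb
    obtain ⟨e, he, rfl⟩ := ha
    obtain ⟨e', he', h2⟩ := hb
    have hm : e'.out.2 ∈ e := by rw [h2]; exact Sym2.out_fst_mem e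
    have heq : e' = e :=
      hshare e' he' e he (e'.out.2) (Sym2.out_snd_mem e') hm
    subst heq
    exact hdiag e' he' h2.symm
  have hcard2 : 2 * negE.card ≤ Fintype.card V := by
    have c1 : (negE.image fun e => e.out.1).card = negE.card :=
      Finset.card_image_of_injOn hinj1
    have c2 : (negE.image fun e => e.out.2).card = negE.card :=
      Finset.card_image_of_injOn hinj2
    have cu := Finset.card_union_of_disjoint hdisj
    have hle := Finset.card_le_univ
      ((negE.image fun e => e.out.1) ∪ (negE.image fun e => e.out.2))
    omega
  set X := negE.image (fun e => e.out.1) with hX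
  have hXcard : X.card ≤ negE.card := Finset.card_image_le
  have hbal : IsBalanced (G.induce ((↑X : Set V)ᶜ)) (induceSign σ ((↑X : Set V)ᶜ)) := by
    intro a w _
    let f : G.induce ((↑X : Set V)ᶜ) →g G := ⟨Subtype.val, fun {x y} h => h⟩
    have hedges : (w.map f).edges = w.edges.map (Sym2.map Subtype.val) :=
      SimpleGraph.Walk.edges_map f w
    have h1 : walkSign (induceSign σ ((↑X : Set V)ᶜ)) w = walkSign σ (w.map f) := by
      unfold walkSign induceSign
      rw [hedges, List.map_map]
      rfl
    rw [h1, ← walkSign_eq_of_switchEquiv hτeq (w.map f)]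
    unfold walkSign
    apply List.prod_eq_one
    intro x hx
    obtain ⟨e, he, rfl⟩ := List.mem_map.mp hx
    rcases Int.units_eq_one_or (τ e) with h1' | h1'
    · exact h1'
    exfalso
    have heE : e ∈ G.edgeSet := (w.map f).edges_subset_edgeSet he
    have henegE : e ∈ negE :=
      Finset.mem_filter.mpr ⟨SimpleGraph.mem_edgeFinset.mpr heE, h1'⟩
    have hmemX : e.out.1 ∈ X := Finset.mem_image_of_mem _ henegE
    rw [hedges] at he
    obtain ⟨e0, he0, rfl⟩ := List.mem_map.mp he
    obtain ⟨a0, ha0, ha0'⟩ :=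
      Sym2.mem_map.mp (Sym2.out_fst_mem (Sym2.map Subtype.val e0))
    have hc : (a0 : V) ∈ ((↑X : Set V)ᶜ) := a0.2
    rw [ha0'] at hc
    exact hc (Finset.mem_coe.mpr hmemX)
  have hfr : frustrationNumber G σ ≤ X.card := Nat.sInf_le ⟨X, rfl, hbal⟩
  omega
end

section
/- Let Σ be a signed graph whose underlying graph is cubic (3-regular) and has girth at least 4. Then l(Σ) ≤ (3/8)|V(Σ)|. -/
open SimpleGraph
open scoped Classical

variable {V : Type*}

/-! ### Auxiliary machinery for the proof -/

/-- The product of the values of a vertex signing over the two endpoints of an edge. -/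
noncomputable def sprod (θ : V → ℤˣ) : Sym2 V → ℤˣ :=
  Sym2.lift ⟨fun a b => θ a * θ b, fun a b => mul_comm _ _⟩

@[simp] lemma sprod_mk (θ : V → ℤˣ) (a b : V) : sprod θ s(a,b) = θ a * θ b := rfl

lemma smk_eq_iff {a b c d : V} : s(a,b) = s(c,d) ↔ (a = c ∧ b = d) ∨ (a = d ∧ b = c) := by
  exact Sym2.eq_iff

lemma sym2_repr (e : Sym2 V) : ∃ a b, e = s(a,b) :=
  Sym2.ind (fun a b => ⟨a, b, rfl⟩) e

lemma walkSign_eq {G' : SimpleGraph V} (σ : Sym2 V → ℤˣ) (θ : V → ℤˣ) :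
    ∀ {a b : V} (w : G'.Walk a b), (∀ e ∈ w.edges, σ e = sprod θ e) →
      walkSign σ w = θ a * θ b := by
  intro a b w
  induction w with
  | nil => intro _; simp [walkSign, Int.units_mul_self]
  | @cons a x b h p ih =>
      intro hall
      have h1 : σ s(a, x) = θ a * θ x := by
        have := hall s(a,x) (by simp)
        simpa using this
      have h2 : walkSign σ p = θ x * θ b := ih (fun e he => hall e (by simp [he]))
      have h3 : walkSign σ (SimpleGraph.Walk.cons h p) = σ s(a,x) * walkSign σ p := by
        simp [walkSign]
      rw [h3, h1, h2]
      calc θ a * θ x * (θ x * θ b) = θ a * (θ x * θ x) * θ b := by group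
        _ = θ a * θ b := by rw [Int.units_mul_self, mul_one]

section Main

variable [Fintype V]

/-- The set of edges of `G` on which `σ` disagrees with the potential induced by `θ`. -/
noncomputable def badE (G : SimpleGraph V) [DecidableRel G.Adj] (σ : Sym2 V → ℤˣ) (θ : V → ℤˣ) : Finset (Sym2 V) :=
  G.edgeFinset.filter (fun e => σ e * sprod θ e ≠ 1)

lemma mem_badE {G : SimpleGraph V} [DecidableRel G.Adj] {σ : Sym2 V → ℤˣ} {θ : V → ℤˣ} {e : Sym2 V} :
    e ∈ badE G σ θ ↔ e ∈ G.edgeFinset ∧ σ e * sprod θ e ≠ 1 := Finset.mem_filter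

lemma balanced_del (G : SimpleGraph V) [DecidableRel G.Adj] (σ : Sym2 V → ℤˣ) (θ : V → ℤˣ) :
    IsBalanced (G.deleteEdges ↑(badE G σ θ)) σ := by
  intro v w _
  have hall : ∀ e ∈ w.edges, σ e = sprod θ e := by
    intro e he
    have hmem := w.edges_subset_edgeSet he
    rw [SimpleGraph.edgeSet_deleteEdges] at hmem
    obtain ⟨hG, hns⟩ := hmem
    have hnot : ¬ (σ e * sprod θ e ≠ 1) := by
      intro hbad
      exact hns (by exact_mod_cast mem_badE.2 ⟨SimpleGraph.mem_edgeFinset.2 hG, hbad⟩)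
    have h1 : σ e * sprod θ e = 1 :=
      not_not.mp hnot
    calc σ e = σ e * (sprod θ e * sprod θ e) := by rw [Int.units_mul_self, mul_one]
      _ = (σ e * sprod θ e) * sprod θ e := by rw [mul_assoc]
      _ = sprod θ e := by rw [h1, one_mul]
  rw [walkSign_eq σ θ w hall, Int.units_mul_self]

lemma fi_le (G : SimpleGraph V) [DecidableRel G.Adj] (σ : Sym2 V → ℤˣ) (θ : V → ℤˣ) :
    frustrationIndex G σ ≤ (badE G σ θ).card :=
  Nat.sInf_le ⟨badE G σ θ, rfl, balanced_del G σ θ⟩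

/-- Flipping a vertex signing on a set of vertices. -/
noncomputable def flipF (θ : V → ℤˣ) (S : Finset V) : V → ℤˣ :=
  fun v => if v ∈ S then -θ v else θ v

lemma sprod_flip_same {θ : V → ℤˣ} {S : Finset V} {a b : V} (h : a ∈ S ↔ b ∈ S) :
    sprod (flipF θ S) s(a,b) = sprod θ s(a,b) := by
  by_cases ha : a ∈ S
  · have hb : b ∈ S := h.1 ha
    simp [flipF, ha, hb]
  · have hb : b ∉ S := fun hb => ha (h.2 hb)
    simp [flipF, ha, hb]

lemma sprod_flip_diff {θ : V → ℤˣ} {S : Finset V} {a b : V} (h : ¬ (a ∈ S ↔ b ∈ S)) :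
    sprod (flipF θ S) s(a,b) = -sprod θ s(a,b) := by
  by_cases ha : a ∈ S
  · have hb : b ∉ S := fun hb => h ⟨fun _ => hb, fun _ => ha⟩
    simp [flipF, ha, hb]
  · have hb : b ∈ S := by
      by_contra hb; exact h ⟨fun h' => absurd h' ha, fun h' => absurd h' hb⟩
    simp [flipF, ha, hb]

lemma neg_ne_one_iff (x : ℤˣ) : -x ≠ 1 ↔ x = 1 := by
  rcases Int.units_eq_one_or x with h | h <;> subst h <;> decide

lemma badE_flip_same {G : SimpleGraph V} [DecidableRel G.Adj] {σ : Sym2 V → ℤˣ} {θ : V → ℤˣ} {S : Finset V}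
    {a b : V} (h : a ∈ S ↔ b ∈ S) :
    (s(a,b) ∈ badE G σ (flipF θ S) ↔ s(a,b) ∈ badE G σ θ) := by
  rw [mem_badE, mem_badE, sprod_flip_same h]

lemma badE_flip_diff {G : SimpleGraph V} [DecidableRel G.Adj] {σ : Sym2 V → ℤˣ} {θ : V → ℤˣ} {S : Finset V}
    {a b : V} (he : s(a,b) ∈ G.edgeFinset) (h : ¬ (a ∈ S ↔ b ∈ S)) :
    (s(a,b) ∈ badE G σ (flipF θ S) ↔ s(a,b) ∉ badE G σ θ) := by
  rw [mem_badE, mem_badE, sprod_flip_diff h, mul_neg, neg_ne_one_iff]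
  constructor
  · intro ⟨_, h1⟩ ⟨_, h2⟩; exact h2 h1
  · intro h1
    refine ⟨he, ?_⟩
    by_contra h2
    exact h1 ⟨he, h2⟩

/-- The set of edges at a vertex. -/
noncomputable def incE (G : SimpleGraph V) [DecidableRel G.Adj] (w : V) : Finset (Sym2 V) :=
  (G.neighborFinset w).image (fun y => s(w,y))

lemma mem_incE {G : SimpleGraph V} [DecidableRel G.Adj] {w : V} {e : Sym2 V}
    (he : e ∈ G.edgeFinset) (hw : w ∈ e) : e ∈ incE G w := by
  obtain ⟨y, rfl⟩ := Sym2.mem_iff_exists.1 hw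
  have hadj : G.Adj w y := by
    rw [SimpleGraph.mem_edgeFinset, SimpleGraph.mem_edgeSet] at he
    exact he
  exact Finset.mem_image.2 ⟨y, by simp [hadj], rfl⟩

lemma smk_mem_incE {G : SimpleGraph V} [DecidableRel G.Adj] {w y : V} (h : G.Adj w y) : s(w,y) ∈ incE G w :=
  Finset.mem_image.2 ⟨y, by simp [h], rfl⟩

lemma card_incE (G : SimpleGraph V) [DecidableRel G.Adj] (w : V) : (incE G w).card = G.degree w := by
  rw [incE, Finset.card_image_of_injOn, SimpleGraph.card_neighborFinset_eq_degree]
  intro y1 _ y2 _ hEq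
  exact Sym2.congr_right.1 hEq

lemma card_lt_card_flip {α : Type*} [DecidableEq α] {b' b ep em : Finset α}
    (h1 : b' ⊆ b ∪ ep) (h2 : em ⊆ b) (h3 : Disjoint ep b) (h4 : Disjoint em b')
    (h5 : ep.card < em.card) : b'.card < b.card := by
  have key : (b' ∪ em).card ≤ (b ∪ ep).card :=
    Finset.card_le_card (Finset.union_subset h1 (h2.trans Finset.subset_union_left))
  rw [Finset.card_union_of_disjoint h4.symm] at key
  rw [Finset.card_union_of_disjoint h3.symm] at key
  omega

/-- At a minimizing signing, no vertex lies in two distinct bad edges. -/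
lemma bad_matching (G : SimpleGraph V) [DecidableRel G.Adj] (σ : Sym2 V → ℤˣ)
    (hcubic : G.IsRegularOfDegree 3) {θ₀ : V → ℤˣ}
    (hmin : ∀ θ, (badE G σ θ₀).card ≤ (badE G σ θ).card)
    {e1 e2 : Sym2 V} (h1 : e1 ∈ badE G σ θ₀) (h2 : e2 ∈ badE G σ θ₀)
    (hne : e1 ≠ e2) {w : V} (hw1 : w ∈ e1) (hw2 : w ∈ e2) : False := by
  set B := badE G σ θ₀ with hB
  set θ' := flipF θ₀ {w} with hθ'
  set B' := badE G σ θ' with hB'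
  have toggle : ∀ e ∈ G.edgeFinset, w ∈ e → (e ∈ B' ↔ e ∉ B) := by
    intro e he hwe
    obtain ⟨y, rfl⟩ := Sym2.mem_iff_exists.1 hwe
    have hadj : G.Adj w y := by
      rw [SimpleGraph.mem_edgeFinset, SimpleGraph.mem_edgeSet] at he
      exact he
    have hy : y ∉ ({w} : Finset V) := by simp [hadj.ne']
    exact badE_flip_diff he (by simp [hy])
  have notoggle : ∀ e ∈ G.edgeFinset, w ∉ e → (e ∈ B' ↔ e ∈ B) := by
    intro e he hwe
    obtain ⟨a, b, rfl⟩ := sym2_repr e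
    have ha : a ∉ ({w} : Finset V) := by
      simp only [Finset.mem_singleton]
      intro h; exact hwe (h ▸ Sym2.mem_mk_left a b)
    have hb : b ∉ ({w} : Finset V) := by
      simp only [Finset.mem_singleton]
      intro h; exact hwe (h ▸ Sym2.mem_mk_right a b)
    exact badE_flip_same (by simp [ha, hb])
  have he1F : e1 ∈ G.edgeFinset := (mem_badE.1 h1).1
  have he2F : e2 ∈ G.edgeFinset := (mem_badE.1 h2).1
  set Em : Finset (Sym2 V) := {e1, e2} with hEm
  set Ep : Finset (Sym2 V) := (incE G w \ Em) \ B with hEp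
  have hsub : B' ⊆ B ∪ Ep := by
    intro e he'
    have heF : e ∈ G.edgeFinset := (mem_badE.1 he').1
    by_cases hwe : w ∈ e
    · have henB : e ∉ B := (toggle e heF hwe).1 he'
      have hinc : e ∈ incE G w := mem_incE heF hwe
      have hnotEm : e ∉ Em := by
        intro hmem
        rcases Finset.mem_insert.1 hmem with rfl | hmem'
        · exact henB h1
        · rw [Finset.mem_singleton] at hmem'
          exact henB (hmem' ▸ h2)
      exact Finset.mem_union_right _ (by
        rw [hEp, Finset.mem_sdiff, Finset.mem_sdiff]
        exact ⟨⟨hinc, hnotEm⟩, henB⟩)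
    · exact Finset.mem_union_left _ ((notoggle e heF hwe).1 he')
  have hEmB : Em ⊆ B := by
    rw [hEm]
    intro e he
    rcases Finset.mem_insert.1 he with rfl | he'
    · exact h1
    · rw [Finset.mem_singleton] at he'
      exact he' ▸ h2
  have hd1 : Disjoint Ep B := Finset.sdiff_disjoint
  have hd2 : Disjoint Em B' := by
    rw [Finset.disjoint_left]
    intro e he hB'e
    have heF : e ∈ G.edgeFinset := (mem_badE.1 hB'e).1
    have hweB : e ∈ B := hEmB he
    have hwe : w ∈ e := by
      rcases Finset.mem_insert.1 he with rfl | he'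
      · exact hw1
      · rw [Finset.mem_singleton] at he'
        exact he' ▸ hw2
    exact ((toggle e heF hwe).1 hB'e) hweB
  have hEmcard : Em.card = 2 := Finset.card_pair hne
  have hEpcard : Ep.card ≤ 1 := by
    have hsub2 : Ep ⊆ incE G w \ Em := Finset.sdiff_subset
    have hEmInc : Em ⊆ incE G w := by
      rw [hEm]
      intro e he
      rcases Finset.mem_insert.1 he with rfl | he'
      · exact mem_incE he1F hw1
      · rw [Finset.mem_singleton] at he'
        subst he'
        exact mem_incE he2F hw2
    have := Finset.card_sdiff_of_subset hEmInc
    rw [hEmcard, card_incE, hcubic w] at this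
    calc Ep.card ≤ (incE G w \ Em).card := Finset.card_le_card hsub2
      _ = 1 := this
  have hlt : B'.card < B.card := card_lt_card_flip hsub hEmB hd1 hd2 (by omega)
  have hmin' := hmin θ'
  rw [← hB'] at hmin'
  omega

/-- Neighbor enumeration for a cubic graph. -/
lemma nbrs_eq (G : SimpleGraph V) [DecidableRel G.Adj] (hcubic : G.IsRegularOfDegree 3) {u v x1 x2 : V}
    (h1 : G.Adj u v) (h2 : G.Adj u x1) (h3 : G.Adj u x2)
    (hvx1 : v ≠ x1) (hvx2 : v ≠ x2) (hx12 : x1 ≠ x2) :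
    ∀ y, G.Adj u y → y = v ∨ y = x1 ∨ y = x2 := by
  have hT : ({v, x1, x2} : Finset V) ⊆ G.neighborFinset u := by
    intro y hy
    simp only [Finset.mem_insert, Finset.mem_singleton] at hy
    rcases hy with rfl | rfl | rfl <;> simp [h1, h2, h3]
  have hTcard : ({v, x1, x2} : Finset V).card = 3 := by
    rw [Finset.card_insert_of_notMem (by simp [hvx1, hvx2]), Finset.card_pair hx12]
  have hNcard : (G.neighborFinset u).card = 3 := by
    rw [SimpleGraph.card_neighborFinset_eq_degree, hcubic u]
  have heq : ({v, x1, x2} : Finset V) = G.neighborFinset u :=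
    Finset.eq_of_subset_of_card_le hT (by omega)
  intro y hy
  have : y ∈ ({v, x1, x2} : Finset V) := heq ▸ (SimpleGraph.mem_neighborFinset G u y).2 hy
  simpa using this

lemma no_triangle {G : SimpleGraph V} (hg : 4 ≤ G.girth) {a b c : V}
    (hab : G.Adj a b) (hbc : G.Adj b c) (hca : G.Adj c a) : False := by
  have hab' : a ≠ b := hab.ne
  have hbc' : b ≠ c := hbc.ne
  have hca' : c ≠ a := hca.ne
  set w : G.Walk a a :=
    SimpleGraph.Walk.cons hab (SimpleGraph.Walk.cons hbc (SimpleGraph.Walk.cons hca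
      SimpleGraph.Walk.nil)) with hw
  have hcyc : w.IsCycle := by
    rw [SimpleGraph.Walk.isCycle_def]
    refine ⟨?_, by simp [hw], ?_⟩
    · rw [SimpleGraph.Walk.isTrail_def]
      simp only [hw, SimpleGraph.Walk.edges_cons, SimpleGraph.Walk.edges_nil, List.nodup_cons,
        List.mem_cons, List.not_mem_nil, or_false, List.nodup_nil, and_true, List.mem_singleton,
        Sym2.mk_eq_mk_iff]
      simp [Prod.ext_iff]
      tauto
    · simp only [hw, SimpleGraph.Walk.support_cons, SimpleGraph.Walk.support_nil,
        List.tail_cons, List.nodup_cons, List.mem_cons, List.not_mem_nil, or_false,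
        List.nodup_nil, and_true, List.mem_singleton]
      have h1 : b ≠ a := fun h => hab' h.symm
      have h3 : a ≠ c := fun h => hca' h.symm
      push_neg
      tauto
  have hle : G.egirth ≤ (3 : ℕ∞) := by
    have h4 : G.egirth ≤ (w.length : ℕ∞) := by
      apply iInf_le_of_le a
      apply iInf_le_of_le w
      exact iInf_le _ hcyc
    simpa [hw] using h4
  have : G.girth ≤ 3 := by
    have := ENat.toNat_le_toNat hle (by simp)
    simpa [SimpleGraph.girth] using this
  omega


/-- At a minimizing signing (cubic, girth ≥ 4): if `u` is in a bad edge `s(u,v)`, its other two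
neighbors `x1, x2` cannot both be covered by bad edges. -/
lemma no_double (G : SimpleGraph V) [DecidableRel G.Adj] (σ : Sym2 V → ℤˣ)
    (hcubic : G.IsRegularOfDegree 3) (hgirth : 4 ≤ G.girth) {θ₀ : V → ℤˣ}
    (hmin : ∀ θ, (badE G σ θ₀).card ≤ (badE G σ θ).card)
    {u v x1 x2 z1 z2 : V}
    (huv : s(u,v) ∈ badE G σ θ₀) (hbx1 : s(x1,z1) ∈ badE G σ θ₀)
    (hbx2 : s(x2,z2) ∈ badE G σ θ₀)
    (ha1 : G.Adj u x1) (ha2 : G.Adj u x2)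
    (hvx1 : v ≠ x1) (hvx2 : v ≠ x2) (hx12 : x1 ≠ x2) : False := by
  have hAuv : G.Adj u v := by
    have := (mem_badE.1 huv).1
    rwa [SimpleGraph.mem_edgeFinset, SimpleGraph.mem_edgeSet] at this
  have hA1 : G.Adj x1 z1 := by
    have := (mem_badE.1 hbx1).1
    rwa [SimpleGraph.mem_edgeFinset, SimpleGraph.mem_edgeSet] at this
  have hA2 : G.Adj x2 z2 := by
    have := (mem_badE.1 hbx2).1
    rwa [SimpleGraph.mem_edgeFinset, SimpleGraph.mem_edgeSet] at this
  -- basic distinctness facts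
  have hux1 : u ≠ x1 := ha1.ne
  have hux2 : u ≠ x2 := ha2.ne
  have huv' : u ≠ v := hAuv.ne
  have hz1u : z1 ≠ u := by
    intro heq
    rw [heq] at hbx1
    refine bad_matching G σ hcubic hmin hbx1 huv ?_
      (Sym2.mem_mk_right x1 u) (Sym2.mem_mk_left u v)
    intro h
    rw [smk_eq_iff] at h
    rcases h with ⟨h1, _⟩ | ⟨h2, _⟩
    · exact hux1 h1.symm
    · exact hvx1 h2.symm
  have hz2u : z2 ≠ u := by
    intro heq
    rw [heq] at hbx2
    refine bad_matching G σ hcubic hmin hbx2 huv ?_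
      (Sym2.mem_mk_right x2 u) (Sym2.mem_mk_left u v)
    intro h
    rw [smk_eq_iff] at h
    rcases h with ⟨h1, _⟩ | ⟨h2, _⟩
    · exact hux2 h1.symm
    · exact hvx2 h2.symm
  have hz1x2 : z1 ≠ x2 := by
    rintro rfl
    exact no_triangle hgirth ha1 hA1 ha2.symm
  have hz2x1 : z2 ≠ x1 := by
    rintro rfl
    exact no_triangle hgirth ha2 hA2 ha1.symm
  have hz1x1 : z1 ≠ x1 := hA1.ne'
  have hz2x2 : z2 ≠ x2 := hA2.ne'
  have hvu : v ≠ u := huv'.symm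
  -- the flip set
  set S : Finset V := {u, x1, x2} with hS
  have hmemS : ∀ y, y ∈ S ↔ y = u ∨ y = x1 ∨ y = x2 := by
    intro y; simp [hS]
  have hvS : v ∉ S := by
    rw [hmemS]; push_neg; exact ⟨hvu, hvx1, hvx2⟩
  have hz1S : z1 ∉ S := by
    rw [hmemS]; push_neg; exact ⟨hz1u, hz1x1, hz1x2⟩
  have hz2S : z2 ∉ S := by
    rw [hmemS]; push_neg; exact ⟨hz2u, hz2x1, hz2x2⟩
  have huS : u ∈ S := by rw [hmemS]; tauto
  have hx1S : x1 ∈ S := by rw [hmemS]; tauto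
  have hx2S : x2 ∈ S := by rw [hmemS]; tauto
  set θ' := flipF θ₀ S with hθ'
  set B := badE G σ θ₀ with hB
  set B' := badE G σ θ' with hB'
  set Em : Finset (Sym2 V) := {s(u,v), s(x1,z1), s(x2,z2)} with hEmdef
  set A1 : Finset (Sym2 V) := incE G x1 \ {s(x1,u), s(x1,z1)} with hA1def
  set A2 : Finset (Sym2 V) := incE G x2 \ {s(x2,u), s(x2,z2)} with hA2def
  set Ep : Finset (Sym2 V) := (A1 ∪ A2) \ B with hEpdef
  -- neighbor enumeration at u
  have hnbru := nbrs_eq G hcubic hAuv ha1 ha2 hvx1 hvx2 hx12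
  -- the toggled-good-edge classification
  have haux : ∀ a b : V, G.Adj a b → a ∈ S → b ∉ S →
      s(a,b) ∉ B → s(a,b) ∈ A1 ∪ A2 := by
    intro a b hadj haS hbS hnB
    rcases (hmemS a).1 haS with rfl | rfl | rfl
    · -- a = u : impossible, since then b = v and s(u,v) is bad
      exfalso
      rcases hnbru b hadj with rfl | rfl | rfl
      · exact hnB huv
      · exact hbS hx1S
      · exact hbS hx2S
    · -- a = x1
      apply Finset.mem_union_left
      rw [hA1def, Finset.mem_sdiff]
      refine ⟨smk_mem_incE hadj, ?_⟩
      simp only [Finset.mem_insert, Finset.mem_singleton]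
      push_neg
      constructor
      · intro h
        have hbu : b = u := Sym2.congr_right.1 h
        exact hbS (hbu ▸ huS)
      · intro h
        exact hnB (h ▸ hbx1)
    · -- a = x2
      apply Finset.mem_union_right
      rw [hA2def, Finset.mem_sdiff]
      refine ⟨smk_mem_incE hadj, ?_⟩
      simp only [Finset.mem_insert, Finset.mem_singleton]
      push_neg
      constructor
      · intro h
        have hbu : b = u := Sym2.congr_right.1 h
        exact hbS (hbu ▸ huS)
      · intro h
        exact hnB (h ▸ hbx2)
  have hsub : B' ⊆ B ∪ Ep := by
    intro e he'
    have heF : e ∈ G.edgeFinset := (mem_badE.1 he').1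
    obtain ⟨a, b, rfl⟩ := sym2_repr e
    have hadj : G.Adj a b := by
      rw [SimpleGraph.mem_edgeFinset, SimpleGraph.mem_edgeSet] at heF
      exact heF
    by_cases hiff : (a ∈ S ↔ b ∈ S)
    · exact Finset.mem_union_left _ ((badE_flip_same hiff).1 he')
    · have hnB : s(a,b) ∉ B := (badE_flip_diff heF hiff).1 he'
      have hmemEp : s(a,b) ∈ A1 ∪ A2 := by
        by_cases haS : a ∈ S
        · have hbS : b ∉ S := fun hb => hiff ⟨fun _ => hb, fun _ => haS⟩
          exact haux a b hadj haS hbS hnB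
        · have hbS : b ∈ S := by
            by_contra hb
            exact hiff ⟨fun h => absurd h haS, fun h => absurd h hb⟩
          rw [Sym2.eq_swap] at hnB he' ⊢
          exact haux b a hadj.symm hbS haS hnB
      apply Finset.mem_union_right
      rw [hEpdef, Finset.mem_sdiff]
      exact ⟨hmemEp, hnB⟩
  have hEmB : Em ⊆ B := by
    rw [hEmdef]
    intro e he
    simp only [Finset.mem_insert, Finset.mem_singleton] at he
    rcases he with rfl | rfl | rfl
    · exact huv
    · exact hbx1
    · exact hbx2
  have hd1 : Disjoint Ep B := Finset.sdiff_disjoint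
  have hd2 : Disjoint Em B' := by
    rw [Finset.disjoint_left]
    intro e he hB'e
    rw [hEmdef] at he
    simp only [Finset.mem_insert, Finset.mem_singleton] at he
    rcases he with rfl | rfl | rfl
    · have : s(u,v) ∉ B :=
        (badE_flip_diff (mem_badE.1 huv).1
          (by intro h; exact hvS (h.1 huS))).1 hB'e
      exact this huv
    · have : s(x1,z1) ∉ B :=
        (badE_flip_diff (mem_badE.1 hbx1).1
          (by intro h; exact hz1S (h.1 hx1S))).1 hB'e
      exact this hbx1
    · have : s(x2,z2) ∉ B :=
        (badE_flip_diff (mem_badE.1 hbx2).1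
          (by intro h; exact hz2S (h.1 hx2S))).1 hB'e
      exact this hbx2
  -- cardinalities
  have hd12 : s(u,v) ≠ s(x1,z1) := by
    intro h; rw [smk_eq_iff] at h
    rcases h with ⟨h1, _⟩ | ⟨h1, _⟩
    · exact hux1 h1
    · exact hz1u h1.symm
  have hd13 : s(u,v) ≠ s(x2,z2) := by
    intro h; rw [smk_eq_iff] at h
    rcases h with ⟨h1, _⟩ | ⟨h1, _⟩
    · exact hux2 h1
    · exact hz2u h1.symm
  have hd23 : s(x1,z1) ≠ s(x2,z2) := by
    intro h; rw [smk_eq_iff] at h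
    rcases h with ⟨h1, _⟩ | ⟨h1, _⟩
    · exact hx12 h1
    · exact hz2x1 h1.symm
  have hEmcard : Em.card = 3 := by
    rw [hEmdef, Finset.card_insert_of_notMem (by simp [hd12, hd13]),
      Finset.card_pair hd23]
  have hA1card : A1.card ≤ 1 := by
    have hsub2 : ({s(x1,u), s(x1,z1)} : Finset (Sym2 V)) ⊆ incE G x1 := by
      intro e he
      simp only [Finset.mem_insert, Finset.mem_singleton] at he
      rcases he with rfl | rfl
      · exact smk_mem_incE ha1.symm
      · exact smk_mem_incE hA1
    have hne' : s(x1,u) ≠ s(x1,z1) := by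
      intro h
      exact hz1u (Sym2.congr_right.1 h).symm
    have := Finset.card_sdiff_of_subset hsub2
    rw [Finset.card_pair hne', card_incE, hcubic x1] at this
    rw [hA1def]
    omega
  have hA2card : A2.card ≤ 1 := by
    have hsub2 : ({s(x2,u), s(x2,z2)} : Finset (Sym2 V)) ⊆ incE G x2 := by
      intro e he
      simp only [Finset.mem_insert, Finset.mem_singleton] at he
      rcases he with rfl | rfl
      · exact smk_mem_incE ha2.symm
      · exact smk_mem_incE hA2
    have hne' : s(x2,u) ≠ s(x2,z2) := by
      intro h
      exact hz2u (Sym2.congr_right.1 h).symm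
    have := Finset.card_sdiff_of_subset hsub2
    rw [Finset.card_pair hne', card_incE, hcubic x2] at this
    rw [hA2def]
    omega
  have hEpcard : Ep.card ≤ 2 := by
    calc Ep.card ≤ (A1 ∪ A2).card := Finset.card_le_card Finset.sdiff_subset
      _ ≤ A1.card + A2.card := Finset.card_union_le _ _
      _ ≤ 2 := by omega
  have hlt : B'.card < B.card := card_lt_card_flip hsub hEmB hd1 hd2 (by omega)
  have hmin' := hmin θ'
  rw [← hB'] at hmin'
  omega

/-- For a signed graph whose underlying graph is cubic with girth at least 4,
l(Σ) ≤ (3/8)|V(Σ)|. -/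
theorem frustrationIndex_le_of_cubic_girth_ge_four {V : Type*} [Fintype V]
    (G : SimpleGraph V) [DecidableRel G.Adj] (σ : Sym2 V → ℤˣ)
    (hcubic : G.IsRegularOfDegree 3) (hgirth : 4 ≤ G.girth) :
    8 * frustrationIndex G σ ≤ 3 * Fintype.card V := by
  classical
  obtain ⟨θ₀, hmin⟩ : ∃ θ₀ : V → ℤˣ, ∀ θ : V → ℤˣ,
      (badE G σ θ₀).card ≤ (badE G σ θ).card := by
    obtain ⟨θ₀, -, h⟩ := Finset.exists_min_image (Finset.univ : Finset (V → ℤˣ))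
      (fun θ => (badE G σ θ).card) ⟨fun _ => 1, Finset.mem_univ _⟩
    exact ⟨θ₀, fun θ => h θ (Finset.mem_univ θ)⟩
  set B := badE G σ θ₀ with hB
  have hmatch : ∀ e1 ∈ B, ∀ e2 ∈ B, e1 ≠ e2 → ∀ w : V, w ∈ e1 → w ∈ e2 → False :=
    fun e1 h1 e2 h2 hne w hw1 hw2 => bad_matching G σ hcubic hmin h1 h2 hne hw1 hw2
  set C := B.biUnion (fun e => Finset.univ.filter (fun w => w ∈ e)) with hC
  have memC : ∀ w : V, w ∈ C ↔ ∃ e ∈ B, w ∈ e := by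
    intro w; simp [hC]
  have hCcard : C.card = 2 * B.card := by
    rw [hC, Finset.card_biUnion]
    · have hparts : ∀ e ∈ B, (Finset.univ.filter (fun w => w ∈ e)).card = 2 := by
        intro e he
        have heF : e ∈ G.edgeFinset := (mem_badE.1 he).1
        obtain ⟨a, b, rfl⟩ := sym2_repr e
        have hadj : G.Adj a b := by
          rw [SimpleGraph.mem_edgeFinset, SimpleGraph.mem_edgeSet] at heF
          exact heF
        have hset : Finset.univ.filter (fun w => w ∈ s(a,b)) = {a, b} := by
          ext w; simp [Sym2.mem_iff]
        rw [hset, Finset.card_pair hadj.ne]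
      rw [Finset.sum_congr rfl hparts, Finset.sum_const, smul_eq_mul, mul_comm]
    · intro e1 h1 e2 h2 hne
      rw [Function.onFun, Finset.disjoint_left]
      intro w hw1 hw2
      simp only [Finset.mem_filter] at hw1 hw2
      exact hmatch e1 h1 e2 h2 hne w hw1.2 hw2.2
  have hnbr : ∀ u ∈ C, ∃ w, G.Adj u w ∧ w ∉ C := by
    intro u huC
    by_contra hcon
    push_neg at hcon
    obtain ⟨e, heB, hue⟩ := (memC u).1 huC
    obtain ⟨v, rfl⟩ := Sym2.mem_iff_exists.1 hue
    have heF : s(u,v) ∈ G.edgeFinset := (mem_badE.1 heB).1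
    have hAuv : G.Adj u v := by
      rw [SimpleGraph.mem_edgeFinset, SimpleGraph.mem_edgeSet] at heF
      exact heF
    have hcard2 : ((G.neighborFinset u).erase v).card = 2 := by
      rw [Finset.card_erase_of_mem (by simp [hAuv]),
        SimpleGraph.card_neighborFinset_eq_degree, hcubic u]
    obtain ⟨x1, hx1m, x2, hx2m, hx12⟩ := Finset.one_lt_card.1
      (by omega : 1 < ((G.neighborFinset u).erase v).card)
    have hx1adj : G.Adj u x1 :=
      (SimpleGraph.mem_neighborFinset G u x1).1 (Finset.mem_of_mem_erase hx1m)
    have hx2adj : G.Adj u x2 :=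
      (SimpleGraph.mem_neighborFinset G u x2).1 (Finset.mem_of_mem_erase hx2m)
    have hvx1 : v ≠ x1 := fun h => (Finset.ne_of_mem_erase hx1m) h.symm
    have hvx2 : v ≠ x2 := fun h => (Finset.ne_of_mem_erase hx2m) h.symm
    obtain ⟨e1, he1B, h1e⟩ := (memC x1).1 (hcon x1 hx1adj)
    obtain ⟨z1, rfl⟩ := Sym2.mem_iff_exists.1 h1e
    obtain ⟨e2, he2B, h2e⟩ := (memC x2).1 (hcon x2 hx2adj)
    obtain ⟨z2, rfl⟩ := Sym2.mem_iff_exists.1 h2e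
    exact no_double G σ hcubic hgirth hmin heB he1B he2B hx1adj hx2adj hvx1 hvx2 hx12
  set U := Cᶜ with hU
  set cross := (C ×ˢ U).filter (fun p => G.Adj p.1 p.2) with hcross
  have h1 : C.card ≤ cross.card := by
    apply Finset.card_le_card_of_injOn
      (fun u => (u, if h : ∃ w, G.Adj u w ∧ w ∉ C then h.choose else u))
    · intro u huC
      have hex : ∃ w, G.Adj u w ∧ w ∉ C := hnbr u huC
      simp only [dif_pos hex]
      obtain ⟨hadj, hnC⟩ := hex.choose_spec
      rw [hcross, Finset.mem_coe, Finset.mem_filter, Finset.mem_product]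
      exact ⟨⟨huC, by rw [hU]; simpa using hnC⟩, hadj⟩
    · intro u1 _ u2 _ hEq
      exact congrArg Prod.fst hEq
  have h2 : cross.card ≤ 3 * U.card := by
    have hsub : cross ⊆ U.biUnion (fun w => (G.neighborFinset w).image (fun y => (y, w))) := by
      intro p hp
      rw [hcross, Finset.mem_filter, Finset.mem_product] at hp
      obtain ⟨⟨hp1, hp2⟩, hadj⟩ := hp
      refine Finset.mem_biUnion.2 ⟨p.2, hp2, ?_⟩
      exact Finset.mem_image.2 ⟨p.1, by simp [hadj.symm], rfl⟩
    calc cross.card ≤ _ := Finset.card_le_card hsub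
      _ ≤ ∑ w ∈ U, ((G.neighborFinset w).image (fun y => (y, w))).card :=
          Finset.card_biUnion_le
      _ ≤ ∑ _w ∈ U, 3 := by
          apply Finset.sum_le_sum
          intro w _
          calc ((G.neighborFinset w).image (fun y => (y, w))).card
              ≤ (G.neighborFinset w).card := Finset.card_image_le
            _ = 3 := by rw [SimpleGraph.card_neighborFinset_eq_degree, hcubic w]
      _ = 3 * U.card := by rw [Finset.sum_const, smul_eq_mul, mul_comm]
  have h3 : C.card + U.card = Fintype.card V := by
    rw [hU]; exact Finset.card_add_card_compl C
  have h4 : frustrationIndex G σ ≤ B.card := by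
    rw [hB]; exact fi_le G σ θ₀
  omega

end Main
end

section
/- Let Σ be a signed graph whose underlying graph is cubic and has girth at least 4. Then l₀(Σ) ≤ (3/8)|V(Σ)|. -/
open SimpleGraph
open scoped Classical

variable {V : Type*}

/-!
### Auxiliary machinery

We show that for a spin assignment `s : V → Bool` minimizing the number of
frustrated ("bad") edges, the bad edges form a matching (single-vertex switch),
and moreover no vertex incident to a bad edge has both of its other two
neighbors incident to bad edges (a three-vertex switch, using triangle-freeness).
Counting then gives that at most `3n/8` edges are bad, and deleting one endpoint
of each bad edge yields a balanced induced subgraph.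
-/

namespace FrusAux

open Finset

section Sign

variable {V : Type*}

/-- sign of a boolean -/
def sgn (b : Bool) : ℤˣ := if b then -1 else 1

@[simp] lemma sgn_true : sgn true = -1 := rfl
@[simp] lemma sgn_false : sgn false = 1 := rfl

lemma sgn_xor (a b : Bool) : sgn (xor a b) = sgn a * sgn b := by
  cases a <;> cases b <;> decide

/-- product of spins at the two endpoints -/
def spinProd (s : V → Bool) : Sym2 V → ℤˣ :=
  Sym2.lift ⟨fun a b => sgn (s a) * sgn (s b), fun _ _ => mul_comm _ _⟩

lemma spinProd_mk (s : V → Bool) (a b : V) :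
    spinProd s s(a, b) = sgn (s a) * sgn (s b) := rfl

/-- whether an edge is cut by the flip-set `t` -/
def cutSel (t : V → Bool) : Sym2 V → Bool :=
  Sym2.lift ⟨fun a b => xor (t a) (t b), fun _ _ => Bool.xor_comm _ _⟩

lemma cutSel_mk (t : V → Bool) (a b : V) :
    cutSel t s(a, b) = xor (t a) (t b) := rfl

lemma spinProd_flip (s t : V → Bool) (e : Sym2 V) :
    spinProd (fun v => xor (t v) (s v)) e = sgn (cutSel t e) * spinProd s e := by
  induction e using Sym2.ind with
  | _ a b =>
    rw [spinProd_mk, spinProd_mk, cutSel_mk, sgn_xor, sgn_xor, sgn_xor]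
    rw [mul_mul_mul_comm]

lemma units_ne_neg_iff (u w : ℤˣ) : u ≠ -w ↔ u = w := by
  rcases Int.units_eq_one_or u with rfl | rfl <;>
    rcases Int.units_eq_one_or w with rfl | rfl <;> decide

lemma sym2_out_eq (e : Sym2 V) : s(e.out.1, e.out.2) = e := by
  rw [Sym2.mk]; exact e.out_eq

end Sign

section Graph

variable {V : Type*} [Fintype V] (G : SimpleGraph V) [DecidableRel G.Adj]

/-- the set of "bad" (frustrated) edges for the spin `s` -/
noncomputable def badSet (σ : Sym2 V → ℤˣ) (s : V → Bool) : Finset (Sym2 V) :=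
  G.edgeFinset.filter (fun e => σ e ≠ spinProd s e)

/-- the set of edges cut by the flip-set `t` -/
noncomputable def cutSet (t : V → Bool) : Finset (Sym2 V) :=
  G.edgeFinset.filter (fun e => cutSel t e = true)

variable (σ : Sym2 V → ℤˣ)

lemma badSet_subset (s : V → Bool) : badSet G σ s ⊆ G.edgeFinset := filter_subset _ _

lemma badSet_flip (s t : V → Bool) :
    badSet G σ (fun v => xor (t v) (s v)) =
      (badSet G σ s \ cutSet G t) ∪ (cutSet G t \ badSet G σ s) := by
  ext e
  simp only [badSet, cutSet, mem_union, mem_sdiff, mem_filter, spinProd_flip]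
  cases h : cutSel t e
  · simp
  · simp only [sgn_true, neg_one_mul, units_ne_neg_iff]
    tauto

/-- The master inequality: at a global minimum spin, every cut contains at least as
many good edges as bad edges. -/
lemma master {s₀ : V → Bool}
    (hmin : ∀ s, (badSet G σ s₀).card ≤ (badSet G σ s).card) (t : V → Bool) :
    (badSet G σ s₀ ∩ cutSet G t).card ≤ (cutSet G t \ badSet G σ s₀).card := by
  have h := hmin (fun v => xor (t v) (s₀ v))
  rw [badSet_flip] at h
  rw [card_union_of_disjoint disjoint_sdiff_sdiff] at h
  have h1 := card_sdiff_add_card_inter (badSet G σ s₀) (cutSet G t)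
  omega

/-- extract the second endpoint of an edge containing x -/
lemma exists_partner {x : V} {e : Sym2 V} (he : e ∈ G.edgeFinset) (hx : x ∈ e) :
    ∃ p, G.Adj x p ∧ e = s(x, p) := by
  obtain ⟨p, rfl⟩ := Sym2.mem_iff_exists.mp hx
  exact ⟨p, by rwa [mem_edgeFinset, mem_edgeSet] at he, rfl⟩

lemma mem_cutSet_singleton {v : V} {e : Sym2 V} (he : e ∈ G.edgeFinset) (hv : v ∈ e) :
    e ∈ cutSet G (fun w => decide (w = v)) := by
  obtain ⟨p, hadj, rfl⟩ := exists_partner G he hv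
  refine mem_filter.mpr ⟨he, ?_⟩
  rw [cutSel_mk]
  simp [hadj.ne']

lemma cutSet_singleton_eq (v : V) :
    cutSet G (fun w => decide (w = v)) = (G.neighborFinset v).image (fun w => s(v, w)) := by
  ext e
  constructor
  · intro he
    have he' := (mem_filter.mp he).1
    have hcut := (mem_filter.mp he).2
    induction e using Sym2.ind with
    | _ a b =>
      have hab : G.Adj a b := by rwa [mem_edgeFinset, mem_edgeSet] at he'
      rw [cutSel_mk] at hcut
      simp only [mem_image, mem_neighborFinset]
      by_cases hav : a = v <;> by_cases hbv : b = v <;> simp [hav, hbv] at hcut ⊢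
      · exact ⟨b, hav ▸ hab, by tauto⟩
      · exact ⟨a, (hbv ▸ hab).symm, by tauto⟩
  · intro he
    obtain ⟨w, hw, rfl⟩ := mem_image.mp he
    rw [mem_neighborFinset] at hw
    exact mem_cutSet_singleton G (by rwa [mem_edgeFinset, mem_edgeSet]) (Sym2.mem_mk_left _ _)

lemma card_cutSet_singleton (hcubic : G.IsRegularOfDegree 3) (v : V) :
    (cutSet G (fun w => decide (w = v))).card = 3 := by
  rw [cutSet_singleton_eq]
  rw [Finset.card_image_of_injOn (fun a _ b _ h => Sym2.congr_right.mp h)]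
  exact hcubic v

/-- At a global minimum, the bad edges form a matching. -/
lemma bad_matching (hcubic : G.IsRegularOfDegree 3) {s₀ : V → Bool}
    (hmaster : ∀ t, (badSet G σ s₀ ∩ cutSet G t).card ≤ (cutSet G t \ badSet G σ s₀).card)
    {v : V} {e₁ e₂ : Sym2 V} (h₁ : e₁ ∈ badSet G σ s₀) (h₂ : e₂ ∈ badSet G σ s₀)
    (hv₁ : v ∈ e₁) (hv₂ : v ∈ e₂) : e₁ = e₂ := by
  by_contra hne
  set t := fun w => decide (w = v) with ht
  have hC : (cutSet G t).card = 3 := card_cutSet_singleton G hcubic v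
  have hsub : {e₁, e₂} ⊆ badSet G σ s₀ ∩ cutSet G t := by
    intro e he
    rcases Finset.mem_insert.mp he with rfl | he
    · exact mem_inter.mpr ⟨h₁, mem_cutSet_singleton G (badSet_subset G σ s₀ h₁) hv₁⟩
    · rw [Finset.mem_singleton] at he; subst he
      exact mem_inter.mpr ⟨h₂, mem_cutSet_singleton G (badSet_subset G σ s₀ h₂) hv₂⟩
  have h2 : 2 ≤ (badSet G σ s₀ ∩ cutSet G t).card := by
    calc 2 = ({e₁, e₂} : Finset (Sym2 V)).card := (Finset.card_pair hne).symm
    _ ≤ _ := Finset.card_le_card hsub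
  have hm := hmaster t
  have hpart := card_inter_add_card_sdiff (cutSet G t) (badSet G σ s₀)
  rw [Finset.inter_comm] at hpart
  omega

lemma triangle_free (hgirth : 4 ≤ G.girth) {a b c : V}
    (hab : G.Adj a b) (hbc : G.Adj b c) (hac : G.Adj a c) : False := by
  let w : G.Walk a a := Walk.cons hab (Walk.cons hbc (Walk.cons hac.symm Walk.nil))
  have hcyc : w.IsCycle := by
    rw [Walk.cons_isCycle_iff]
    refine ⟨?_, ?_⟩
    · rw [Walk.cons_isPath_iff]
      refine ⟨?_, ?_⟩
      · rw [Walk.cons_isPath_iff]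
        refine ⟨Walk.IsPath.nil, ?_⟩
        simp [hac.ne']
      · simp [hab.ne', hbc.ne]
    · simp [Sym2.eq_iff, hab.ne, hbc.ne, hac.ne]
  have h3 : G.egirth ≤ 3 := by
    refine le_trans (iInf_le_of_le a (iInf_le_of_le w (iInf_le _ hcyc))) ?_
    simp [w]
  have h4 : G.girth ≤ 3 := by
    have := ENat.toNat_le_toNat h3 (by decide)
    simpa [SimpleGraph.girth] using this
  omega

/-- characterize the neighborhood of a degree-3 vertex with three known distinct neighbors -/
lemma nbhd_eq (hcubic : G.IsRegularOfDegree 3) {x a b c : V}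
    (ha : G.Adj x a) (hb : G.Adj x b) (hc : G.Adj x c)
    (hab : a ≠ b) (hac : a ≠ c) (hbc : b ≠ c) :
    ∀ w, G.Adj x w → w = a ∨ w = b ∨ w = c := by
  have hsub : ({a, b, c} : Finset V) ⊆ G.neighborFinset x := by
    intro w hw
    simp only [Finset.mem_insert, Finset.mem_singleton] at hw
    rcases hw with rfl | rfl | rfl <;> simp [mem_neighborFinset, ha, hb, hc]
  have hcard : ({a, b, c} : Finset V).card = 3 := by
    rw [Finset.card_insert_of_notMem (by simp [hab, hac]),
      Finset.card_insert_of_notMem (by simp [hbc]), Finset.card_singleton]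
  have heq : ({a, b, c} : Finset V) = G.neighborFinset x :=
    Finset.eq_of_subset_of_card_le hsub (by rw [hcard]; exact le_of_eq (hcubic x))
  intro w hw
  have : w ∈ ({a, b, c} : Finset V) := heq ▸ (mem_neighborFinset G x w).mpr hw
  simpa using this

/-- extract a third neighbor distinct from two given ones -/
lemma third_nbr (hcubic : G.IsRegularOfDegree 3) {y : V} (u v : V)
    (hu : G.Adj y u) (hv : G.Adj y v) (huv : u ≠ v) :
    ∃ a, G.Adj y a ∧ a ≠ u ∧ a ≠ v := by
  have hsub : ({u, v} : Finset V) ⊆ G.neighborFinset y := by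
    intro w hw
    simp only [Finset.mem_insert, Finset.mem_singleton] at hw
    rcases hw with rfl | rfl <;> simp [mem_neighborFinset, hu, hv]
  have h2 : ({u, v} : Finset V).card = 2 := Finset.card_pair huv
  have h3 : (G.neighborFinset y).card = 3 := hcubic y
  have hne : (G.neighborFinset y \ {u, v}).Nonempty := by
    rw [← Finset.card_pos, Finset.card_sdiff_of_subset hsub, h2, h3]; norm_num
  obtain ⟨a, ha⟩ := hne
  rw [Finset.mem_sdiff, mem_neighborFinset] at ha
  refine ⟨a, ha.1, ?_, ?_⟩ <;> intro h <;> apply ha.2 <;> simp [h]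

/-- The key structural lemma: a vertex incident to a bad edge cannot have both of
its good neighbors incident to bad edges. -/
lemma cherry (hcubic : G.IsRegularOfDegree 3) (hgirth : 4 ≤ G.girth)
    {A : Finset (Sym2 V)} (hA : A ⊆ G.edgeFinset)
    (hmaster : ∀ t, (A ∩ cutSet G t).card ≤ (cutSet G t \ A).card)
    {x y z px py pz : V}
    (hxy : G.Adj x y) (hxz : G.Adj x z) (hyz : y ≠ z)
    (gxy : s(x, y) ∉ A) (gxz : s(x, z) ∉ A)
    (bx : s(x, px) ∈ A) (hby : s(y, py) ∈ A) (bz : s(z, pz) ∈ A) : False := by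
  have edge_adj : ∀ {u w : V}, s(u, w) ∈ A → G.Adj u w := fun h => by
    have := hA h; rwa [mem_edgeFinset, mem_edgeSet] at this
  have axp : G.Adj x px := edge_adj bx
  have ayp : G.Adj y py := edge_adj hby
  have azp : G.Adj z pz := edge_adj bz
  -- distinctness facts
  have hxny : x ≠ y := hxy.ne
  have hxnz : x ≠ z := hxz.ne
  have hpxx : px ≠ x := axp.ne'
  have hpxy : px ≠ y := fun h => gxy (h ▸ bx)
  have hpxz : px ≠ z := fun h => gxz (h ▸ bx)
  have hpyy : py ≠ y := ayp.ne'
  have hpyx : py ≠ x := fun h => gxy (by rw [Sym2.eq_swap]; exact h ▸ hby)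
  have hpyz : py ≠ z := fun h => triangle_free G hgirth hxy (h ▸ ayp) hxz
  have hpzz : pz ≠ z := azp.ne'
  have hpzx : pz ≠ x := fun h => gxz (by rw [Sym2.eq_swap]; exact h ▸ bz)
  have hpzy : pz ≠ y := fun h => triangle_free G hgirth hxz (h ▸ azp) hxy
  -- neighborhood of x
  have hnx : ∀ w, G.Adj x w → w = px ∨ w = y ∨ w = z :=
    nbhd_eq G hcubic axp hxy hxz hpxy hpxz hyz
  -- third neighbors of y and z
  obtain ⟨a, hya, hax, hapy⟩ := third_nbr G hcubic x py hxy.symm ayp (Ne.symm hpyx)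
  have haz : a ≠ z := fun h => triangle_free G hgirth hxy (h ▸ hya) hxz
  have hny : ∀ w, G.Adj y w → w = x ∨ w = py ∨ w = a :=
    nbhd_eq G hcubic hxy.symm ayp hya (Ne.symm hpyx) (Ne.symm hax) (Ne.symm hapy)
  obtain ⟨c, hzc, hcx, hcpz⟩ := third_nbr G hcubic x pz hxz.symm azp (Ne.symm hpzx)
  have hcy : c ≠ y := fun h => triangle_free G hgirth hxz (h ▸ hzc) hxy
  have hnz : ∀ w, G.Adj z w → w = x ∨ w = pz ∨ w = c :=
    nbhd_eq G hcubic hxz.symm azp hzc (Ne.symm hpzx) (Ne.symm hcx) (Ne.symm hcpz)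
  -- the flip set
  set t : V → Bool := fun w => decide (w = x ∨ w = y ∨ w = z) with ht
  have htx : t x = true := by simp [ht]
  have hty : t y = true := by simp [ht]
  have htz : t z = true := by simp [ht]
  have htf : ∀ {w : V}, w ≠ x → w ≠ y → w ≠ z → t w = false := by
    intro w h1 h2 h3; simp [ht, h1, h2, h3]
  -- the three bad cut edges
  have mem_cut : ∀ {u w : V}, G.Adj u w → t u = true → t w = false →
      s(u, w) ∈ cutSet G t := by
    intro u w hadj hu hw
    refine mem_filter.mpr ⟨by rwa [mem_edgeFinset, mem_edgeSet], ?_⟩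
    rw [cutSel_mk, hu, hw]; rfl
  have he1 : s(x, px) ∈ A ∩ cutSet G t :=
    mem_inter.mpr ⟨bx, mem_cut axp htx (htf hpxx hpxy hpxz)⟩
  have he2 : s(y, py) ∈ A ∩ cutSet G t :=
    mem_inter.mpr ⟨hby, mem_cut ayp hty (htf hpyx hpyy hpyz)⟩
  have he3 : s(z, pz) ∈ A ∩ cutSet G t :=
    mem_inter.mpr ⟨bz, mem_cut azp htz (htf hpzx hpzy hpzz)⟩
  have hne12 : s(x, px) ≠ s(y, py) := by
    intro h
    rcases Sym2.eq_iff.mp h with ⟨h1, _⟩ | ⟨h1, _⟩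
    exacts [hxny h1, hpyx h1.symm]
  have hne13 : s(x, px) ≠ s(z, pz) := by
    intro h
    rcases Sym2.eq_iff.mp h with ⟨h1, _⟩ | ⟨h1, _⟩
    exacts [hxnz h1, hpzx h1.symm]
  have hne23 : s(y, py) ≠ s(z, pz) := by
    intro h
    rcases Sym2.eq_iff.mp h with ⟨h1, _⟩ | ⟨h1, _⟩
    exacts [hyz h1, hpzy h1.symm]
  have hlow : 3 ≤ (A ∩ cutSet G t).card := by
    have hsub : ({s(x, px), s(y, py), s(z, pz)} : Finset (Sym2 V)) ⊆ A ∩ cutSet G t := by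
      intro e he
      simp only [Finset.mem_insert, Finset.mem_singleton] at he
      rcases he with rfl | rfl | rfl <;> assumption
    have hcard : ({s(x, px), s(y, py), s(z, pz)} : Finset (Sym2 V)).card = 3 := by
      rw [Finset.card_insert_of_notMem (by simp [hne12, hne13]),
        Finset.card_insert_of_notMem (by simp [hne23]), Finset.card_singleton]
    calc 3 = _ := hcard.symm
    _ ≤ _ := Finset.card_le_card hsub
  -- upper bound on good cut edges
  have key : ∀ u w : V, G.Adj u w → t u = true → t w = false → s(u, w) ∉ A →
      s(u, w) = s(y, a) ∨ s(u, w) = s(z, c) := by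
    intro u w hadj hu hw hnA
    have hu' : u = x ∨ u = y ∨ u = z := by
      rw [ht] at hu; simpa using hu
    have hwx : w ≠ x := fun h => by rw [ht, h] at hw; simp at hw
    have hwy : w ≠ y := fun h => by rw [ht, h] at hw; simp at hw
    have hwz : w ≠ z := fun h => by rw [ht, h] at hw; simp at hw
    rcases hu' with rfl | rfl | rfl
    · rcases hnx w hadj with rfl | rfl | rfl
      · exact absurd bx hnA
      · exact absurd rfl hwy
      · exact absurd rfl hwz
    · rcases hny w hadj with rfl | rfl | rfl
      · exact absurd rfl hwx
      · exact absurd hby hnA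
      · exact Or.inl rfl
    · rcases hnz w hadj with rfl | rfl | rfl
      · exact absurd rfl hwx
      · exact absurd bz hnA
      · exact Or.inr rfl
  have hupsub : cutSet G t \ A ⊆ ({s(y, a), s(z, c)} : Finset (Sym2 V)) := by
    intro e
    induction e using Sym2.ind with
    | _ u w =>
      intro he
      rw [mem_sdiff] at he
      obtain ⟨hC, hnA⟩ := he
      have heE := (mem_filter.mp hC).1
      have hcut := (mem_filter.mp hC).2
      rw [cutSel_mk] at hcut
      have hadj : G.Adj u w := by rwa [mem_edgeFinset, mem_edgeSet] at heE
      simp only [Finset.mem_insert, Finset.mem_singleton]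
      cases hu : t u <;> cases hw : t w <;> rw [hu, hw] at hcut <;> simp at hcut
      · -- t u = false, t w = true : swap
        rw [Sym2.eq_swap] at hnA ⊢
        exact key w u hadj.symm hw hu hnA
      · exact key u w hadj hu hw hnA
  have hup : (cutSet G t \ A).card ≤ 2 := by
    calc (cutSet G t \ A).card ≤ _ := Finset.card_le_card hupsub
    _ ≤ 2 := (Finset.card_insert_le _ _).trans (by simp)
  have := hmaster t
  omega

/-- the set of matched vertices -/
noncomputable def matchedSet (A : Finset (Sym2 V)) : Finset V :=
  Finset.univ.filter (fun v => ∃ e ∈ A, v ∈ e)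

lemma mem_matchedSet {A : Finset (Sym2 V)} {v : V} :
    v ∈ matchedSet A ↔ ∃ e ∈ A, v ∈ e := by simp [matchedSet]

lemma card_matchedSet {A : Finset (Sym2 V)} (hA : A ⊆ G.edgeFinset)
    (hmatch : ∀ {v : V} {e₁ e₂ : Sym2 V}, e₁ ∈ A → e₂ ∈ A → v ∈ e₁ → v ∈ e₂ → e₁ = e₂) :
    (matchedSet A : Finset V).card = 2 * A.card := by
  have hM : (matchedSet A : Finset V) = A.biUnion (fun e => {e.out.1, e.out.2}) := by
    ext v
    rw [mem_matchedSet, Finset.mem_biUnion]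
    constructor
    · rintro ⟨e, he, hv⟩
      refine ⟨e, he, ?_⟩
      rw [← sym2_out_eq e, Sym2.mem_iff] at hv
      simpa using hv
    · rintro ⟨e, he, hv⟩
      refine ⟨e, he, ?_⟩
      simp only [Finset.mem_insert, Finset.mem_singleton] at hv
      rcases hv with rfl | rfl
      · exact Sym2.out_fst_mem e
      · exact Sym2.out_snd_mem e
  rw [hM, Finset.card_biUnion, mul_comm]
  · rw [Finset.sum_congr rfl (fun e he => ?_), Finset.sum_const, smul_eq_mul]
    rw [Finset.card_insert_of_notMem (by
      simp only [Finset.mem_singleton]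
      intro h
      have hd : e.IsDiag := by
        rw [← sym2_out_eq e, Sym2.mk_isDiag_iff]; exact h
      exact (G.not_isDiag_of_mem_edgeSet (mem_edgeFinset.mp (hA he))) hd),
      Finset.card_singleton]
  · intro e₁ h₁ e₂ h₂ hne
    rw [Function.onFun, Finset.disjoint_left]
    intro v hv₁ hv₂
    apply hne
    have m₁ : v ∈ e₁ := by
      simp only [Finset.mem_insert, Finset.mem_singleton] at hv₁
      rcases hv₁ with rfl | rfl
      exacts [Sym2.out_fst_mem e₁, Sym2.out_snd_mem e₁]
    have m₂ : v ∈ e₂ := by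
      simp only [Finset.mem_insert, Finset.mem_singleton] at hv₂
      rcases hv₂ with rfl | rfl
      exacts [Sym2.out_fst_mem e₂, Sym2.out_snd_mem e₂]
    exact hmatch h₁ h₂ m₁ m₂

/-- every matched vertex has an unmatched neighbor -/
lemma exists_unmatched_nbr (hcubic : G.IsRegularOfDegree 3) (hgirth : 4 ≤ G.girth)
    {A : Finset (Sym2 V)} (hA : A ⊆ G.edgeFinset)
    (hmaster : ∀ t, (A ∩ cutSet G t).card ≤ (cutSet G t \ A).card)
    (hmatch : ∀ {v : V} {e₁ e₂ : Sym2 V}, e₁ ∈ A → e₂ ∈ A → v ∈ e₁ → v ∈ e₂ → e₁ = e₂) :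
    ∀ x ∈ matchedSet A, ∃ u, G.Adj x u ∧ u ∉ matchedSet A := by
  intro x hx
  obtain ⟨e, heA, hxe⟩ := mem_matchedSet.mp hx
  obtain ⟨px, axp, rfl⟩ := exists_partner G (hA heA) hxe
  -- the two other neighbors of x
  have hpxmem : px ∈ G.neighborFinset x := (mem_neighborFinset G x px).mpr axp
  have hcard2 : (G.neighborFinset x \ {px}).card = 2 := by
    have h3 : (G.neighborFinset x).card = 3 := hcubic x
    rw [Finset.card_sdiff_of_subset (by simpa using hpxmem), Finset.card_singleton, h3]
  have h1lt : 1 < (G.neighborFinset x \ {px}).card := by omega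
  obtain ⟨y, hy, z, hz, hyz⟩ := Finset.one_lt_card.mp h1lt
  rw [Finset.mem_sdiff, mem_neighborFinset, Finset.mem_singleton] at hy hz
  obtain ⟨hxy, hypx⟩ := hy
  obtain ⟨hxz, hzpx⟩ := hz
  have gxy : s(x, y) ∉ A := by
    intro hbad
    exact hypx (Sym2.congr_right.mp (hmatch hbad heA (Sym2.mem_mk_left x y)
      (Sym2.mem_mk_left x px)))
  have gxz : s(x, z) ∉ A := by
    intro hbad
    exact hzpx (Sym2.congr_right.mp (hmatch hbad heA (Sym2.mem_mk_left x z)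
      (Sym2.mem_mk_left x px)))
  by_cases hyM : y ∈ matchedSet A
  · by_cases hzM : z ∈ matchedSet A
    · exfalso
      obtain ⟨ey, heyA, hye⟩ := mem_matchedSet.mp hyM
      obtain ⟨py, _, rfl⟩ := exists_partner G (hA heyA) hye
      obtain ⟨ez, hezA, hze⟩ := mem_matchedSet.mp hzM
      obtain ⟨pz, _, rfl⟩ := exists_partner G (hA hezA) hze
      exact cherry G hcubic hgirth hA hmaster hxy hxz hyz gxy gxz heA heyA hezA
    · exact ⟨z, hxz, hzM⟩
  · exact ⟨y, hxy, hyM⟩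

/-- the main count: if every matched vertex has an unmatched neighbor, then
the number of matched vertices is at most three times the unmatched ones. -/
lemma matched_le (hcubic : G.IsRegularOfDegree 3) {A : Finset (Sym2 V)}
    (hout : ∀ x ∈ matchedSet A, ∃ u, G.Adj x u ∧ u ∉ matchedSet A) :
    (matchedSet A : Finset V).card ≤ 3 * (Finset.univ \ matchedSet A).card := by
  set M := (matchedSet A : Finset V)
  set N := Finset.univ \ M with hN
  have hsub : M ⊆ N.biUnion (fun u => G.neighborFinset u) := by
    intro x hx
    obtain ⟨u, hadj, hu⟩ := hout x hx
    exact Finset.mem_biUnion.mpr ⟨u, by simp [hN, hu], by simp [mem_neighborFinset, hadj.symm]⟩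
  calc M.card ≤ (N.biUnion (fun u => G.neighborFinset u)).card := Finset.card_le_card hsub
  _ ≤ ∑ u ∈ N, (G.neighborFinset u).card := Finset.card_biUnion_le
  _ = ∑ u ∈ N, 3 := Finset.sum_congr rfl (fun u _ => hcubic u)
  _ = 3 * N.card := by rw [Finset.sum_const, smul_eq_mul, mul_comm]

end Graph

section Balance

variable {V : Type*}

lemma walkSign_nil (σ : Sym2 V → ℤˣ) (G : SimpleGraph V) (u : V) :
    walkSign σ (Walk.nil : G.Walk u u) = 1 := rfl

lemma walkSign_cons (σ : Sym2 V → ℤˣ) {G : SimpleGraph V} {u v w : V}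
    (h : G.Adj u v) (p : G.Walk v w) :
    walkSign σ (Walk.cons h p) = σ s(u, v) * walkSign σ p := by
  rw [walkSign, walkSign, Walk.edges_cons, List.map_cons, List.prod_cons]

lemma isBalanced_of_consistent (H : SimpleGraph V) (τ : Sym2 V → ℤˣ) (c : V → ℤˣ)
    (h : ∀ a b : V, H.Adj a b → τ s(a, b) = c a * c b) : IsBalanced H τ := by
  have key : ∀ (u v : V) (w : H.Walk u v), walkSign τ w = c u * c v := by
    intro u v w
    induction w with
    | nil => exact (walkSign_nil τ H _).trans (Int.units_mul_self _).symm
    | @cons u' v' w' h' p ih =>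
      rw [walkSign_cons, ih, h _ _ h']
      rw [mul_assoc, ← mul_assoc (c v'), Int.units_mul_self, one_mul]
  intro v w _
  rw [key v v w, Int.units_mul_self]

end Balance

end FrusAux

/-- For a signed graph whose underlying graph is cubic with girth at least 4,
l₀(Σ) ≤ (3/8)|V(Σ)|. -/
theorem frustrationNumber_le_of_cubic_girth_ge_four {V : Type*} [Fintype V]
    (G : SimpleGraph V) [DecidableRel G.Adj] (σ : Sym2 V → ℤˣ)
    (hcubic : G.IsRegularOfDegree 3) (hgirth : 4 ≤ G.girth) :
    8 * frustrationNumber G σ ≤ 3 * Fintype.card V := by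
  classical
  open FrusAux Finset in
  -- choose a spin assignment minimizing the number of bad edges
  obtain ⟨s₀, -, hmin'⟩ := Finset.exists_min_image (Finset.univ : Finset (V → Bool))
    (fun s => (badSet G σ s).card) ⟨fun _ => false, Finset.mem_univ _⟩
  have hmin : ∀ s, (badSet G σ s₀).card ≤ (badSet G σ s).card :=
    fun s => hmin' s (Finset.mem_univ s)
  have hmaster := master G σ hmin
  set A := badSet G σ s₀ with hAdef
  have hA : A ⊆ G.edgeFinset := badSet_subset G σ s₀
  have hmatch : ∀ {v : V} {e₁ e₂ : Sym2 V},
      e₁ ∈ A → e₂ ∈ A → v ∈ e₁ → v ∈ e₂ → e₁ = e₂ :=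
    fun h₁ h₂ hv₁ hv₂ => bad_matching G σ hcubic hmaster h₁ h₂ hv₁ hv₂
  have hout : ∀ x ∈ matchedSet A, ∃ u, G.Adj x u ∧ u ∉ matchedSet A :=
    exists_unmatched_nbr G hcubic hgirth hA hmaster hmatch
  -- counting
  have h1 : (matchedSet A : Finset V).card = 2 * A.card := card_matchedSet G hA hmatch
  have h2 : (matchedSet A : Finset V).card ≤ 3 * (Finset.univ \ matchedSet A).card :=
    matched_le G hcubic hout
  have h3 : (Finset.univ \ matchedSet A).card
      = Fintype.card V - (matchedSet A : Finset V).card := by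
    rw [Finset.card_sdiff_of_subset (Finset.subset_univ _), Finset.card_univ]
  have h4 : (matchedSet A : Finset V).card ≤ Fintype.card V := by
    calc (matchedSet A : Finset V).card ≤ (Finset.univ : Finset V).card :=
      Finset.card_le_card (Finset.subset_univ _)
    _ = Fintype.card V := Finset.card_univ
  -- the deletion set: one endpoint of each bad edge
  set X := A.image (fun e => e.out.1) with hX
  have hXcard : X.card ≤ A.card := Finset.card_image_le
  -- the remaining graph is balanced
  have hbal : IsBalanced (G.induce ((↑X : Set V)ᶜ)) (induceSign σ ((↑X : Set V)ᶜ)) := by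
    apply isBalanced_of_consistent _ _ (fun a => sgn (s₀ a.val))
    rintro ⟨a, ha⟩ ⟨b, hb⟩ hadj
    have hadj' : G.Adj a b := by simpa using hadj
    have hmem : s(a, b) ∈ G.edgeFinset := by rwa [mem_edgeFinset, mem_edgeSet]
    have hgood : s(a, b) ∉ A := by
      intro hbad
      have hXm : (s(a, b) : Sym2 V).out.1 ∈ X := by
        rw [hX]; exact Finset.mem_image_of_mem _ hbad
      have hm : (s(a, b) : Sym2 V).out.1 ∈ (s(a, b) : Sym2 V) := Sym2.out_fst_mem _
      rw [Sym2.mem_iff] at hm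
      rcases hm with h | h
      · exact ha (by rw [← h]; exact hXm)
      · exact hb (by rw [← h]; exact hXm)
    have hσ : σ s(a, b) = spinProd s₀ s(a, b) := by
      by_contra hne
      exact hgood (Finset.mem_filter.mpr ⟨hmem, hne⟩)
    show induceSign σ ((↑X : Set V)ᶜ) s(⟨a, ha⟩, ⟨b, hb⟩) = _
    rw [induceSign, Sym2.map_pair_eq]
    rw [hσ, spinProd_mk]
  -- conclude
  have hfn : frustrationNumber G σ ≤ X.card := Nat.sInf_le ⟨X, rfl, hbal⟩
  omega
end
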